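/- The sequence m ↦ I_{2m,2m,2m} / (2·√2 · (2m/e)^{3m}) tends to 1 as m → ∞ (limit along the filter atTop on ℕ). -/

import Mathlib

open MeasureTheory Real

/-- Physicists' Hermite polynomials: `H 0 x = 1`, `H 1 x = 2x`,
`H (n+1) x = 2x * H n x - 2n * H (n-1) x`. -/
noncomputable def hermiteP : ℕ → ℝ → ℝ
  | 0, _ => 1
  | 1, x => 2 * x
  | n + 2, x => 2 * x * hermiteP (n + 1) x - 2 * ((n : ℝ) + 1) * hermiteP n x

/-- `I n m l = √(2/π) ∫ H_n(x) H_m(x) H_l(x) e^{-2x²} dx`. -/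
noncomputable def I (n m l : ℕ) : ℝ :=
  Real.sqrt (2 / π) *
    ∫ x : ℝ, hermiteP n x * hermiteP m x * hermiteP l x * Real.exp (-2 * x ^ 2)


/-! Integrating `(H_a H_b H_c)' e^{-2x²}` by parts, with `H_a' = 2a H_{a-1}` and
`2x H_a = H_{a+1} + 2a H_{a-1}`, gives
`I_{a+1,b,c} = b I_{a,b-1,c} + c I_{a,b,c-1} - a I_{a-1,b,c}`. Together with `I_{0,0,0} = 1` this
recursion is solved, for `a + b + c = 2s`, by `I_{a,b,c} = E(s-a) E(s-b) E(s-c)` with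
`E(k) = (2k-1)‼ = 2^k Γ(k + 1/2) / √π`. Hence `I_{2m,2m,2m} = ((2m)! / (2^m m!))³`, and Stirling's
formula gives `(2m)! / (2^m m!) ~ √2 (2m/e)^m`. -/

open Polynomial Filter Asymptotics

noncomputable def physHermite : ℕ → ℝ[X]
  | 0 => 1
  | 1 => 2 * X
  | n + 2 => 2 * X * physHermite (n + 1) - 2 * ((n : ℝ[X]) + 1) * physHermite n

theorem eval_physHermite : ∀ (n : ℕ) (x : ℝ), (physHermite n).eval x = hermiteP n x
  | 0, x => by simp [hermiteP, physHermite]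
  | 1, x => by simp [hermiteP, physHermite]
  | n + 2, x => by
    simp [hermiteP, physHermite, eval_physHermite (n + 1), eval_physHermite n]

theorem X_mul_physHermite (n : ℕ) :
    2 * X * physHermite n = physHermite (n + 1) + 2 * (n : ℝ[X]) * physHermite (n - 1) := by
  cases n with
  | zero => simp [physHermite]
  | succ n =>
    simp only [physHermite, Nat.add_sub_cancel, Nat.cast_add, Nat.cast_one]
    ring

theorem derivative_physHermite :
    ∀ n : ℕ, derivative (physHermite n) = 2 * (n : ℝ[X]) * physHermite (n - 1)
  | 0 => by simp [physHermite]
  | 1 => by simp [physHermite]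
  | n + 2 => by
    simp only [physHermite, derivative_sub, derivative_mul, derivative_X, derivative_ofNat,
      derivative_add, derivative_natCast, derivative_one, derivative_physHermite (n + 1),
      derivative_physHermite n, Nat.add_sub_cancel, Nat.add_succ_sub_one, Nat.cast_add,
      Nat.cast_ofNat, Nat.cast_one]
    linear_combination (2 * ((n : ℝ[X]) + 1)) * X_mul_physHermite n

section Gaussian

variable {b : ℝ}

theorem integrable_eval_mul_exp_neg_mul_sq (hb : 0 < b) (Q : ℝ[X]) :
    Integrable fun x : ℝ => Q.eval x * exp (-b * x ^ 2) := by
  simp_rw [eval_eq_sum_range, Finset.sum_mul, mul_assoc]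
  refine integrable_finsetSum _ fun i _ => Integrable.const_mul ?_ _
  simpa using integrable_rpow_mul_exp_neg_mul_sq hb (s := i) (by linarith [i.cast_nonneg (α := ℝ)])

theorem integral_eval_derivative_sub_mul_exp_neg_mul_sq (hb : 0 < b) (Q : ℝ[X]) :
    ∫ x : ℝ, (derivative Q - C (2 * b) * X * Q).eval x * exp (-b * x ^ 2) = 0 := by
  refine integral_eq_zero_of_hasDerivAt_of_integrable (fun x => ?_)
    (integrable_eval_mul_exp_neg_mul_sq hb _) (integrable_eval_mul_exp_neg_mul_sq hb Q)
  have hgauss :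
      HasDerivAt (fun y : ℝ => exp (-b * y ^ 2)) (exp (-b * x ^ 2) * (-b * (2 * x))) x := by
    simpa using ((hasDerivAt_pow 2 x).const_mul (-b)).exp
  refine ((Q.hasDerivAt x).mul hgauss).congr_deriv ?_
  simp only [eval_sub, eval_mul, eval_C, eval_X]
  ring

end Gaussian

noncomputable def integralGauss : ℝ[X] →ₗ[ℝ] ℝ where
  toFun Q := ∫ x : ℝ, Q.eval x * exp (-2 * x ^ 2)
  map_add' P Q := by
    simp only [eval_add, add_mul]
    exact integral_add (integrable_eval_mul_exp_neg_mul_sq two_pos P)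
      (integrable_eval_mul_exp_neg_mul_sq two_pos Q)
  map_smul' r Q := by
    simp only [eval_smul, smul_eq_mul, mul_assoc, RingHom.id_apply]
    exact integral_const_mul r _

theorem integralGauss_derivative_sub (Q : ℝ[X]) :
    integralGauss (derivative Q - C 4 * X * Q) = 0 := by
  rw [show (C 4 : ℝ[X]) = C (2 * 2) by norm_num]
  exact integral_eval_derivative_sub_mul_exp_neg_mul_sq two_pos Q

theorem I_eq_integralGauss (a b c : ℕ) :
    I a b c = √(2 / π) * integralGauss (physHermite a * physHermite b * physHermite c) := by
  simp [I, integralGauss, eval_physHermite]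

theorem derivative_physHermite_mul_mul_sub (a b c : ℕ) :
    let Q := physHermite a * physHermite b * physHermite c
    derivative Q - C 4 * X * Q =
      (2 * b : ℝ) • (physHermite a * physHermite (b - 1) * physHermite c)
        + (2 * c : ℝ) • (physHermite a * physHermite b * physHermite (c - 1))
        - (2 : ℝ) • (physHermite (a + 1) * physHermite b * physHermite c)
        - (2 * a : ℝ) • (physHermite (a - 1) * physHermite b * physHermite c) := by
  simp only [smul_eq_C_mul, derivative_mul, derivative_physHermite, map_mul, map_natCast,
    map_ofNat]
  linear_combination (-2 * physHermite b * physHermite c) * X_mul_physHermite a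

theorem I_succ_left (a b c : ℕ) :
    I (a + 1) b c = b * I a (b - 1) c + c * I a b (c - 1) - a * I (a - 1) b c := by
  have key := integralGauss_derivative_sub (physHermite a * physHermite b * physHermite c)
  rw [derivative_physHermite_mul_mul_sub] at key
  simp only [map_sub, map_add, map_smul, smul_eq_mul] at key
  simp only [I_eq_integralGauss]
  linear_combination (-√(2 / π) / 2) * key

theorem I_comm_left (a b c : ℕ) : I b a c = I a b c := by
  simp only [I_eq_integralGauss, mul_comm (physHermite b)]

theorem I_comm_outer (a b c : ℕ) : I c b a = I a b c := by
  simp only [I_eq_integralGauss]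
  ring_nf

theorem I_zero : I 0 0 0 = 1 := by
  simp only [I, hermiteP, one_mul, integral_gaussian]
  rw [← sqrt_mul (by positivity), show 2 / π * (π / 2) = 1 by field_simp, sqrt_one]

/-- `k ↦ (2k - 1)‼`, continued to all `k : ℤ` through `Γ`: the closed form of `I a b c` evaluates
it at negative `k` (at `k = -2` for `I 4 0 0`). -/
noncomputable def oddDoubleFactorial (k : ℤ) : ℝ := 2 ^ k * Gamma (k + 1 / 2) / √π

local notation "E" => oddDoubleFactorial

theorem oddDoubleFactorial_zero : E 0 = 1 := by
  rw [oddDoubleFactorial, Int.cast_zero, zero_add, zpow_zero, one_mul, Gamma_one_half_eq,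
    div_self (by positivity)]

theorem oddDoubleFactorial_add_one (k : ℤ) : E (k + 1) = (2 * k + 1) * E k := by
  have hk : (k : ℝ) + 1 / 2 ≠ 0 := by
    intro h
    have : (2 * k + 1 : ℤ) = 0 := by exact_mod_cast (by linarith : (2 * k + 1 : ℝ) = 0)
    omega
  simp only [oddDoubleFactorial, Int.cast_add, Int.cast_one, add_right_comm _ (1 : ℝ),
    Gamma_add_one hk, zpow_add_one₀ (two_ne_zero' ℝ)]
  ring

open Nat in
theorem oddDoubleFactorial_natCast (m : ℕ) : E m = (2 * m)! / (2 ^ m * m !) := by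
  induction m with
  | zero => simp [oddDoubleFactorial_zero]
  | succ m ih =>
    rw [Nat.cast_succ, oddDoubleFactorial_add_one, ih, Nat.mul_succ, factorial_succ,
      factorial_succ, factorial_succ]
    push_cast
    field_simp
    ring

theorem oddDoubleFactorial_triple (p q r : ℤ) :
    E p * E q * E r = (p + r) * (E p * E q * E (r - 1)) + (p + q) * (E p * E (q - 1) * E r)
      - (q + r - 1) * (E (p + 1) * E (q - 1) * E (r - 1)) := by
  have hq := oddDoubleFactorial_add_one (q - 1)
  have hr := oddDoubleFactorial_add_one (r - 1)
  rw [sub_add_cancel] at hq hr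
  rw [oddDoubleFactorial_add_one p, hq, hr]
  push_cast
  ring

theorem I_succ_left_eq_oddDoubleFactorial {s a b c : ℕ} (h : a + 1 + b + c = 2 * (s + 1))
    (ih : ∀ {a b c : ℕ}, a + b + c = 2 * s → I a b c = E (s - a) * E (s - b) * E (s - c)) :
    I (a + 1) b c = E (s - a) * E (s + 1 - b) * E (s + 1 - c) := by
  obtain ⟨p, hp⟩ : ∃ p : ℤ, p = s - a := ⟨_, rfl⟩
  obtain ⟨q, hq⟩ : ∃ q : ℤ, q = s + 1 - b := ⟨_, rfl⟩
  obtain ⟨r, hr⟩ : ∃ r : ℤ, r = s + 1 - c := ⟨_, rfl⟩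
  have hb : (b : ℝ) * I a (b - 1) c = (p + r) * (E p * E q * E (r - 1)) := by
    rw [show (p : ℝ) + r = b by exact_mod_cast (by omega : p + r = b)]
    rcases b with _ | b
    · simp
    rw [Nat.add_sub_cancel, ih (by omega), hp, hq, hr]
    push_cast
    ring_nf
  have hc : (c : ℝ) * I a b (c - 1) = (p + q) * (E p * E (q - 1) * E r) := by
    rw [show (p : ℝ) + q = c by exact_mod_cast (by omega : p + q = c)]
    rcases c with _ | c
    · simp
    rw [Nat.add_sub_cancel, ih (by omega), hp, hq, hr]
    push_cast
    ring_nf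
  have ha : (a : ℝ) * I (a - 1) b c = (q + r - 1) * (E (p + 1) * E (q - 1) * E (r - 1)) := by
    rw [show (q : ℝ) + r - 1 = a by exact_mod_cast (by omega : q + r - 1 = a)]
    rcases a with _ | a
    · simp
    rw [Nat.add_sub_cancel, ih (by omega), hp, hq, hr]
    push_cast
    ring_nf
  rw [I_succ_left, hb, hc, ha, ← oddDoubleFactorial_triple, hp, hq, hr]

theorem I_eq_oddDoubleFactorial {a b c s : ℕ} (h : a + b + c = 2 * s) :
    I a b c = E (s - a) * E (s - b) * E (s - c) := by
  induction s generalizing a b c with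
  | zero =>
    obtain ⟨rfl, rfl, rfl⟩ : a = 0 ∧ b = 0 ∧ c = 0 := by omega
    simp [I_zero, oddDoubleFactorial_zero]
  | succ s ih =>
    rcases a with _ | a
    · rcases b with _ | b
      · rcases c with _ | c
        · omega
        rw [← I_comm_outer, I_succ_left_eq_oddDoubleFactorial (by omega) ih]
        push_cast
        ring_nf
      rw [← I_comm_left, I_succ_left_eq_oddDoubleFactorial (by omega) ih]
      push_cast
      ring_nf
    rw [I_succ_left_eq_oddDoubleFactorial (by omega) ih]
    push_cast
    ring_nf

theorem I_diag_eq_oddDoubleFactorial_pow (m : ℕ) : I (2 * m) (2 * m) (2 * m) = E m ^ 3 := by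
  rw [I_eq_oddDoubleFactorial (s := 3 * m) (by ring)]
  push_cast
  ring_nf

open Nat in
theorem oddDoubleFactorial_isEquivalent :
    (fun m : ℕ => E m) ~[atTop] fun m => √2 * (2 * m / exp 1) ^ m := by
  have h2m : Tendsto (fun m : ℕ => 2 * m) atTop atTop :=
    tendsto_id.const_mul_atTop' two_pos
  have hquot := (Stirling.factorial_isEquivalent_stirling.comp_tendsto h2m).div
    ((IsEquivalent.refl (u := fun m : ℕ => (2 : ℝ) ^ m)).mul
      Stirling.factorial_isEquivalent_stirling)
  refine (hquot.congr_left (.of_eq ?_)).congr_right ?_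
  · funext m
    simp [oddDoubleFactorial_natCast]
  · filter_upwards [eventually_gt_atTop 0] with m hm
    have : (0 : ℝ) < m := by exact_mod_cast hm
    simp only [Function.comp_apply, Pi.div_apply, Pi.mul_apply, Nat.cast_mul, Nat.cast_ofNat]
    rw [show (2 : ℝ) * (2 * m) * π = 2 * (2 * m * π) by ring, sqrt_mul zero_le_two]
    field_simp
    ring

theorem I3_asymptotic :
    Filter.Tendsto
      (fun m : ℕ =>
        I (2 * m) (2 * m) (2 * m) /
          (2 * Real.sqrt 2 * ((2 * m : ℝ) / Real.exp 1) ^ (3 * m)))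
      Filter.atTop (nhds 1) := by
  have hequiv : (fun m : ℕ => I (2 * m) (2 * m) (2 * m)) ~[atTop]
      fun m => 2 * √2 * ((2 * m : ℝ) / exp 1) ^ (3 * m) := by
    refine ((oddDoubleFactorial_isEquivalent.pow 3).congr_left (.of_eq ?_)).congr_right
      (.of_eq ?_)
    · funext m
      exact (I_diag_eq_oddDoubleFactorial_pow m).symm
    · funext m
      rw [Pi.pow_apply, mul_pow, pow_succ, sq_sqrt zero_le_two, ← pow_mul, mul_comm m]
  refine (isEquivalent_iff_tendsto_one ?_).1 hequiv
  filter_upwards [eventually_gt_atTop 0] with m hm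
  have : (0 : ℝ) < m := by exact_mod_cast hm
  positivity
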